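/- arXiv:1712.07636 — 4 statements merged into one kernel-verified Lean document; each statement's English description precedes it below -/
import Mathlib

section
/- Let h : ℝ → ℝ be smooth with compact support contained in (-1,1). Then there is a constant C > 0 such that for all ε ∈ (0,1) and all t > 0 with t ≠ 2, |Re ∫_ℝ h(s)/(t² + 2ts - iε) ds| ≤ C · (1 + |log|ε/(t² - 2t)||) / (t(t+1)). -/
open MeasureTheory

private lemma odd_int (c δ : ℝ) (hδ : δ ≠ 0) :
    ∫ x in (-1:ℝ)..1, c * x / ((c * x) ^ 2 + δ ^ 2) = 0 := by
  have hden : ∀ x : ℝ, (c * x) ^ 2 + δ ^ 2 ≠ 0 := by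
    intro x
    have hδ2 : 0 < δ ^ 2 := by positivity
    nlinarith [sq_nonneg (c * x)]
  have hcont : Continuous fun x : ℝ => c * x / ((c * x) ^ 2 + δ ^ 2) :=
    Continuous.div (by fun_prop) (by fun_prop) hden
  have hneg : (∫ x in (0:ℝ)..1, (fun y : ℝ => c * y / ((c * y) ^ 2 + δ ^ 2)) (-x))
      = ∫ x in (-1:ℝ)..(-0:ℝ), c * x / ((c * x) ^ 2 + δ ^ 2) :=
    intervalIntegral.integral_comp_neg (a := (0:ℝ)) (b := 1)
      (f := fun y : ℝ => c * y / ((c * y) ^ 2 + δ ^ 2))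
  have hoddfun : (fun x : ℝ => (fun y : ℝ => c * y / ((c * y) ^ 2 + δ ^ 2)) (-x))
      = fun x : ℝ => -(c * x / ((c * x) ^ 2 + δ ^ 2)) := by
    funext x; simp only; ring
  rw [hoddfun] at hneg
  rw [intervalIntegral.integral_neg] at hneg
  have i1 : IntervalIntegrable (fun x : ℝ => c * x / ((c * x) ^ 2 + δ ^ 2)) volume (-1) 0 :=
    hcont.intervalIntegrable _ _
  have i2 : IntervalIntegrable (fun x : ℝ => c * x / ((c * x) ^ 2 + δ ^ 2)) volume 0 1 :=
    hcont.intervalIntegrable _ _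
  have hsplit := intervalIntegral.integral_add_adjacent_intervals i1 i2
  simp only [neg_zero] at hneg
  rw [← hsplit, ← hneg]; ring

private lemma int_bound (g : ℝ → ℝ) (C₀ : ℝ) (hint : Integrable g)
    (hb : ∀ s, |g s| ≤ Set.indicator (Set.Icc (-3:ℝ) 3) (fun _ => C₀) s) :
    |∫ s, g s| ≤ 6 * C₀ := by
  have hBint : Integrable (Set.indicator (Set.Icc (-3:ℝ) 3) (fun _ => C₀)) := by
    apply ((integrableOn_const_iff (C := C₀)).mpr (Or.inr ?_)).integrable_indicator measurableSet_Icc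
    rw [Real.volume_Icc]; exact ENNReal.ofReal_lt_top
  have h1 : ‖∫ s, g s‖ ≤ ∫ s, Set.indicator (Set.Icc (-3:ℝ) 3) (fun _ => C₀) s :=
    norm_integral_le_of_norm_le hBint
      (Filter.Eventually.of_forall fun s => by rw [Real.norm_eq_abs]; exact hb s)
  rw [Real.norm_eq_abs] at h1
  refine h1.trans ?_
  rw [integral_indicator_const _ measurableSet_Icc]
  rw [Real.volume_real_Icc]
  rw [show (3:ℝ) - (-3) = 6 by norm_num, max_eq_left (by norm_num : (0:ℝ) ≤ 6)]
  simp [mul_comm]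

set_option maxHeartbeats 1600000 in
theorem stmt_1 (h : ℝ → ℝ) (hsmooth : ContDiff ℝ (⊤ : ℕ∞) h) (hsupp : HasCompactSupport h)
    (hsub : tsupport h ⊆ Set.Ioo (-1 : ℝ) 1) :
    ∃ C > 0, ∀ ε ∈ Set.Ioo (0 : ℝ) 1, ∀ t : ℝ, 0 < t → t ≠ 2 →
      |(∫ s : ℝ, (h s : ℂ) / ((t : ℂ) ^ 2 + 2 * t * s - Complex.I * ε)).re| ≤
        C * (1 + |Real.log (|ε / (t ^ 2 - 2 * t)|)|) / (t * (t + 1)) := by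
  obtain ⟨M₀, hM₀⟩ := hsupp.exists_bound_of_continuous hsmooth.continuous
  have hM₀0 : 0 ≤ M₀ := le_trans (norm_nonneg _) (hM₀ 0)
  have hdc : Continuous (deriv h) := hsmooth.continuous_deriv (by simp)
  obtain ⟨M₁, hM₁⟩ := hsupp.deriv.exists_bound_of_continuous hdc
  have hM₁0 : 0 ≤ M₁ := le_trans (norm_nonneg _) (hM₁ 0)
  have hlip : ∀ x y : ℝ, |h x - h y| ≤ M₁ * |x - y| := by
    intro x y
    have := Convex.norm_image_sub_le_of_norm_deriv_le (f := h) (s := Set.univ)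
      (fun z _ => (hsmooth.differentiable (by simp)).differentiableAt)
      (fun z _ => hM₁ z) convex_univ
      (Set.mem_univ y) (Set.mem_univ x)
    simpa [Real.norm_eq_abs] using this
  refine ⟨15 * (M₀ + M₁) + 24 * M₀ + 1, by positivity, ?_⟩
  rintro ε ⟨hε0, hε1⟩ t ht ht2
  set C : ℝ := 15 * (M₀ + M₁) + 24 * M₀ + 1 with hCdef
  have hCpos : 0 < C := by positivity
  set K : ℝ → ℝ := fun s => (t^2 + 2*t*s) / ((t^2 + 2*t*s)^2 + ε^2) with hKdef
  have hdenpos : ∀ s : ℝ, 0 < (t^2 + 2*t*s)^2 + ε^2 := fun s =>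
    add_pos_of_nonneg_of_pos (sq_nonneg _) (pow_pos hε0 2)
  have hKcont : Continuous K := by
    apply Continuous.div (by fun_prop) (by fun_prop)
    exact fun s => ne_of_gt (hdenpos s)
  -- the complex integrand
  have hD : ∀ s : ℝ, ((t:ℂ)^2 + 2*t*s - Complex.I*ε) ≠ 0 := by
    intro s hs
    have him : ((t:ℂ)^2 + 2*(t:ℂ)*(s:ℂ) - Complex.I*(ε:ℂ)).im = -ε := by
      simp [pow_two]
    rw [hs] at him
    simp only [Complex.zero_im] at him
    linarith
  have hfcont : Continuous (fun s : ℝ => (h s : ℂ) / ((t:ℂ)^2 + 2*t*s - Complex.I*ε)) := by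
    apply Continuous.div (Complex.continuous_ofReal.comp hsmooth.continuous) (by fun_prop) hD
  have hfsupp : HasCompactSupport (fun s : ℝ => (h s : ℂ) / ((t:ℂ)^2 + 2*t*s - Complex.I*ε)) := by
    apply hsupp.mono
    intro s hs
    simp only [Function.mem_support] at hs ⊢
    intro h0
    exact hs (by rw [h0]; simp)
  have hfint : Integrable (fun s : ℝ => (h s : ℂ) / ((t:ℂ)^2 + 2*t*s - Complex.I*ε)) :=
    hfcont.integrable_of_hasCompactSupport hfsupp
  have hptre : ∀ s : ℝ, ((h s : ℂ) / ((t:ℂ)^2 + 2*t*s - Complex.I*ε)).re = h s * K s := by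
    intro s
    rw [Complex.div_re]
    have h1 : ((t:ℂ)^2 + 2*(t:ℂ)*(s:ℂ) - Complex.I*(ε:ℂ)).re = t^2 + 2*t*s := by
      simp [pow_two]
    have h2 : ((t:ℂ)^2 + 2*(t:ℂ)*(s:ℂ) - Complex.I*(ε:ℂ)).im = -ε := by
      simp [pow_two]
    have h3 : Complex.normSq ((t:ℂ)^2 + 2*(t:ℂ)*(s:ℂ) - Complex.I*(ε:ℂ))
        = (t^2 + 2*t*s)^2 + ε^2 := by
      rw [Complex.normSq_apply, h1, h2]; ring
    rw [h1, h2, h3, Complex.ofReal_re, Complex.ofReal_im, hKdef]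
    ring
  have hre : (∫ s : ℝ, (h s : ℂ) / ((t:ℂ)^2 + 2*t*s - Complex.I*ε)).re
      = ∫ s : ℝ, h s * K s := by
    have h1 := integral_re (μ := volume) hfint
    simp only [RCLike.re_to_complex] at h1
    rw [← h1]
    congr 1
    funext s
    exact hptre s
  have hgint : Integrable (fun s : ℝ => h s * K s) :=
    (hsmooth.continuous.mul hKcont).integrable_of_hasCompactSupport (hsupp.mul_right)
  have hh0 : ∀ s : ℝ, s ∉ Set.Ioo (-1:ℝ) 1 → h s = 0 := by
    intro s hs
    exact image_eq_zero_of_notMem_tsupport (fun hmem => hs (hsub hmem))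
  -- main estimate
  have main : |∫ s : ℝ, h s * K s| ≤ C / (t * (t+1)) := by
    rcases le_or_gt t 4 with ht4 | ht4
    · -- small t : cancellation argument
      set s0 : ℝ := -t/2 with hs0def
      have hs0a : -2 ≤ s0 := by rw [hs0def]; linarith
      have hs0b : s0 < 0 := by rw [hs0def]; linarith
      have hKform : ∀ s : ℝ, K s = 2*t*(s - s0) / ((2*t*(s - s0))^2 + ε^2) := by
        intro s
        have hnum : t^2 + 2*t*s = 2*t*(s - s0) := by rw [hs0def]; ring
        rw [hKdef]
        simp only
        rw [hnum]
      set g2 : ℝ → ℝ := Set.indicator (Set.Icc (s0-1) (s0+1)) (fun s => h s0 * K s) with hg2def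
      have hg2int : Integrable g2 := by
        rw [hg2def]
        exact ((continuous_const.mul hKcont).integrableOn_Icc).integrable_indicator
          measurableSet_Icc
      have hg2zero : (∫ s : ℝ, g2 s) = 0 := by
        rw [hg2def, integral_indicator measurableSet_Icc,
          MeasureTheory.integral_Icc_eq_integral_Ioc,
          ← intervalIntegral.integral_of_le (by linarith : s0 - 1 ≤ s0 + 1),
          intervalIntegral.integral_const_mul]
        have hKint : (∫ s in (s0-1)..(s0+1), K s) = 0 := by
          have hsub' := intervalIntegral.integral_comp_sub_right (a := s0-1) (b := s0+1)
            (f := fun x : ℝ => 2*t*x/((2*t*x)^2+ε^2)) s0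
          have e1 : s0 - 1 - s0 = (-1:ℝ) := by ring
          have e2 : s0 + 1 - s0 = (1:ℝ) := by ring
          rw [e1, e2] at hsub'
          calc (∫ s in (s0-1)..(s0+1), K s)
              = ∫ s in (s0-1)..(s0+1), 2*t*(s - s0)/((2*t*(s - s0))^2+ε^2) := by
                apply intervalIntegral.integral_congr
                intro s _
                exact hKform s
            _ = ∫ x in (-1:ℝ)..1, 2*t*x/((2*t*x)^2+ε^2) := hsub'
            _ = 0 := odd_int (2*t) ε (ne_of_gt hε0)
        rw [hKint, mul_zero]
      set g1 : ℝ → ℝ := fun s => h s * K s - g2 s with hg1def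
      have hg1int : Integrable g1 := hgint.sub hg2int
      have hsplit : (∫ s : ℝ, h s * K s) = ∫ s : ℝ, g1 s := by
        have : (∫ s : ℝ, h s * K s) = (∫ s : ℝ, g1 s) + ∫ s : ℝ, g2 s := by
          rw [← integral_add hg1int hg2int]
          congr 1
          funext s
          rw [hg1def]; ring
        rw [this, hg2zero, add_zero]
      have hbound : ∀ s : ℝ, |g1 s| ≤
          Set.indicator (Set.Icc (-3:ℝ) 3) (fun _ => (M₀+M₁)/(2*t)) s := by
        intro s
        by_cases hs3 : s ∈ Set.Icc (-3:ℝ) 3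
        · rw [Set.indicator_of_mem hs3]
          by_cases hsI : s ∈ Set.Icc (s0-1) (s0+1)
          · have hg1s : g1 s = (h s - h s0) * K s := by
              rw [hg1def]; simp only
              rw [hg2def, Set.indicator_of_mem hsI]
              ring
            rw [hg1s, abs_mul]
            set x : ℝ := 2*t*(s - s0) with hxdef
            have hKx : K s = x / (x^2 + ε^2) := hKform s
            have hdx : 0 < x^2 + ε^2 :=
              add_pos_of_nonneg_of_pos (sq_nonneg _) (pow_pos hε0 2)
            have hKabs : |K s| = |x| / (x^2 + ε^2) := by
              rw [hKx, abs_div, abs_of_pos hdx]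
            have hxabs : |x| = 2*t*|s - s0| := by
              rw [hxdef, abs_mul, abs_of_pos (by linarith : (0:ℝ) < 2*t)]
            have hA : |h s - h s0| ≤ M₁ * |s - s0| := hlip s s0
            rw [hKabs, mul_div_assoc', div_le_div_iff₀ hdx (by linarith : (0:ℝ) < 2*t)]
            have habs : |s - s0| * (2*t) = |x| := by rw [hxabs]; ring
            have hx2 : |x| * |x| = x^2 := by rw [← abs_mul, abs_mul_self, sq]
            have key : |h s - h s0| * |x| * (2*t) ≤ M₁ * x^2 := by
              have e2 := mul_le_mul_of_nonneg_right hA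
                (mul_nonneg (abs_nonneg x) (by linarith : (0:ℝ) ≤ 2*t))
              calc |h s - h s0| * |x| * (2*t)
                  = |h s - h s0| * (|x| * (2*t)) := by ring
                _ ≤ M₁ * |s - s0| * (|x| * (2*t)) := e2
                _ = M₁ * ((|s - s0| * (2*t)) * |x|) := by ring
                _ = M₁ * (|x| * |x|) := by rw [habs]
                _ = M₁ * x^2 := by rw [hx2]
            nlinarith [mul_nonneg hM₀0 hdx.le, mul_nonneg hM₁0 (sq_nonneg ε)]
          · have hg2s : g2 s = 0 := by rw [hg2def]; exact Set.indicator_of_notMem hsI _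
            have hg1s : g1 s = h s * K s := by rw [hg1def]; simp [hg2s]
            have hfar : 1 ≤ |s - s0| := by
              rw [Set.mem_Icc] at hsI
              push_neg at hsI
              rcases le_or_gt (s0 - 1) s with h1 | h1
              · have := hsI h1
                rw [abs_of_pos (by linarith)]; linarith
              · rw [abs_of_neg (by linarith)]; linarith
            set x : ℝ := 2*t*(s - s0) with hxdef
            have hKx : K s = x / (x^2 + ε^2) := hKform s
            have hdx : 0 < x^2 + ε^2 :=
              add_pos_of_nonneg_of_pos (sq_nonneg _) (pow_pos hε0 2)
            have hKabs : |K s| = |x| / (x^2 + ε^2) := by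
              rw [hKx, abs_div, abs_of_pos hdx]
            have hxabs : |x| = 2*t*|s - s0| := by
              rw [hxdef, abs_mul, abs_of_pos (by linarith : (0:ℝ) < 2*t)]
            have hxge : 2*t ≤ |x| := by
              rw [hxabs]
              nlinarith
            have hx2 : |x| * |x| = x^2 := by rw [← abs_mul, abs_mul_self, sq]
            have hKle : |K s| ≤ 1/(2*t) := by
              rw [hKabs, div_le_div_iff₀ hdx (by linarith : (0:ℝ) < 2*t)]
              nlinarith [sq_nonneg ε]
            rw [hg1s, abs_mul]
            have := mul_le_mul (hM₀ s) hKle (abs_nonneg _) hM₀0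
            rw [Real.norm_eq_abs] at this
            calc |h s| * |K s| ≤ M₀ * (1/(2*t)) := this
              _ ≤ (M₀+M₁)/(2*t) := by
                  rw [mul_one_div]
                  gcongr
                  linarith
        · rw [Set.indicator_of_notMem hs3]
          rw [Set.mem_Icc] at hs3
          push_neg at hs3
          have hh : h s = 0 := by
            apply hh0
            rw [Set.mem_Ioo]
            rintro ⟨ha, hb⟩
            rcases le_or_gt (-3:ℝ) s with h1 | h1
            · linarith [hs3 h1]
            · linarith
          have hg2s : g2 s = 0 := by
            rw [hg2def]
            apply Set.indicator_of_notMem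
            rw [Set.mem_Icc]
            rintro ⟨ha, hb⟩
            rcases le_or_gt (-3:ℝ) s with h1 | h1
            · linarith [hs3 h1]
            · linarith
          rw [hg1def]
          simp [hh, hg2s]
      have hb6 : |∫ s : ℝ, g1 s| ≤ 6 * ((M₀+M₁)/(2*t)) := int_bound g1 _ hg1int hbound
      rw [hsplit]
      refine hb6.trans ?_
      rw [mul_div_assoc', div_le_div_iff₀ (by linarith : (0:ℝ) < 2*t) (by positivity : (0:ℝ) < t*(t+1))]
      rw [hCdef]
      nlinarith [mul_le_mul_of_nonneg_right (mul_le_mul_of_nonneg_left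
        (show t+1 ≤ (5:ℝ) by linarith) (add_nonneg hM₀0 hM₁0)) ht.le,
        mul_nonneg hM₀0 ht.le, ht]
    · -- large t : direct bound
      have hbound : ∀ s : ℝ, |h s * K s| ≤
          Set.indicator (Set.Icc (-3:ℝ) 3) (fun _ => 2*M₀/t^2) s := by
        intro s
        by_cases hs : s ∈ Set.Ioo (-1:ℝ) 1
        · rw [Set.indicator_of_mem (by rw [Set.mem_Icc]; constructor <;> [linarith [hs.1]; linarith [hs.2]])]
          obtain ⟨hsa, hsb⟩ := hs
          have hu2 : t^2/2 ≤ t^2 + 2*t*s := by nlinarith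
          have hupos : 0 < t^2 + 2*t*s := by nlinarith
          have hKnn : 0 ≤ K s := by
            rw [hKdef]; simp only
            exact div_nonneg hupos.le (hdenpos s).le
          have hKle : K s ≤ 2/t^2 := by
            rw [hKdef]; simp only
            rw [div_le_div_iff₀ (hdenpos s) (by positivity : (0:ℝ) < t^2)]
            nlinarith [sq_nonneg ε, sq_nonneg (t^2 + 2*t*s)]
          rw [abs_mul, abs_of_nonneg hKnn]
          have := mul_le_mul (hM₀ s) hKle hKnn hM₀0
          rw [Real.norm_eq_abs] at this
          calc |h s| * K s ≤ M₀ * (2/t^2) := this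
            _ = 2*M₀/t^2 := by ring
        · have hh : h s = 0 := hh0 s hs
          simp only [hh, zero_mul, abs_zero]
          exact Set.indicator_apply_nonneg (fun _ => by positivity)
      have hb6 : |∫ s : ℝ, h s * K s| ≤ 6 * (2*M₀/t^2) := int_bound _ _ hgint hbound
      refine hb6.trans ?_
      rw [mul_div_assoc', div_le_div_iff₀ (by positivity : (0:ℝ) < t^2) (by positivity : (0:ℝ) < t*(t+1))]
      rw [hCdef]
      nlinarith [mul_le_mul_of_nonneg_left (show t+1 ≤ 2*t by linarith)
        (mul_nonneg hM₀0 ht.le), mul_nonneg hM₁0 (sq_nonneg t),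
        mul_nonneg hM₀0 (sq_nonneg t), sq_nonneg t]
  rw [hre]
  refine main.trans ?_
  rw [div_le_div_iff₀ (by positivity : (0:ℝ) < t*(t+1)) (by positivity : (0:ℝ) < t*(t+1))]
  have h1 : (1:ℝ) ≤ 1 + |Real.log (|ε / (t ^ 2 - 2 * t)|)| :=
    le_add_of_nonneg_right (abs_nonneg _)
  nlinarith [mul_pos ht (by linarith : (0:ℝ) < t+1), hCpos.le,
    mul_le_mul_of_nonneg_left h1 hCpos.le]
end

section
/- Let h : ℝ → ℝ be smooth with compact support. Then for every t > 0 and every ε > 0, ∫_ℝ h(s)/(t² + 2ts - iε) ds = -(1/(2t)) ∫_ℝ Log(2u - iε/t) · h'(u - t/2) du, where Log denotes the principal branch of the complex logarithm (which is defined at every point 2u - iε/t since these points have strictly negative imaginary part). -/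
open MeasureTheory

theorem stmt_3 (h : ℝ → ℝ) (hsmooth : ContDiff ℝ (⊤ : ℕ∞) h) (hsupp : HasCompactSupport h)
    (t ε : ℝ) (ht : 0 < t) (hε : 0 < ε) :
    ∫ s : ℝ, (h s : ℂ) / ((t : ℂ) ^ 2 + 2 * t * s - Complex.I * ε) =
      -(1 / (2 * (t : ℂ))) *
        ∫ u : ℝ, Complex.log (2 * (u : ℂ) - Complex.I * ((ε : ℂ) / t)) *
          (↑(deriv h (u - t / 2)) : ℂ) := by
  have ht0 : (t:ℂ) ≠ 0 := by exact_mod_cast ht.ne'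
  set c : ℂ := Complex.I * ((ε:ℂ)/t) with hc
  have him : ∀ x : ℝ, (2*(x:ℂ) - c).im = -(ε/t) := by
    intro x
    simp [hc, Complex.div_ofReal_im]
  have hne : ∀ x : ℝ, 2*(x:ℂ) - c ≠ 0 := by
    intro x hx
    have := him x
    rw [hx] at this
    simp at this
    rcases this with h1 | h1 <;> [exact hε.ne' h1; exact ht.ne' h1]
  have hslit : ∀ x : ℝ, 2*(x:ℂ) - c ∈ Complex.slitPlane := by
    intro x
    refine Or.inr ?_
    rw [him x]
    exact neg_ne_zero.mpr (div_pos hε ht).ne'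
  have hu : ∀ x : ℝ, HasDerivAt (fun x:ℝ => Complex.log (2*(x:ℂ) - c))
      (2/(2*(x:ℂ)-c)) x := by
    intro x
    have hlog := Complex.hasDerivAt_log (hslit x)
    have hin : HasDerivAt (fun z:ℂ => 2*z - c) 2 (x:ℂ) := by
      simpa using ((hasDerivAt_id (x:ℂ)).const_mul (2:ℂ)).sub_const c
    have h1 : HasDerivAt (fun z:ℂ => Complex.log (2*z - c)) (2/(2*(x:ℂ)-c)) (x:ℂ) := by
      simpa [div_eq_mul_inv, mul_comm, Function.comp_def] using hlog.comp (x:ℂ) hin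
    exact h1.comp_ofReal
  have hdh : Differentiable ℝ h := hsmooth.differentiable (by simp)
  have hvr : ∀ x : ℝ, HasDerivAt (fun x:ℝ => h (x - t/2)) (deriv h (x - t/2)) x := by
    intro x
    simpa [Function.comp_def] using (hdh (x - t/2)).hasDerivAt.comp x ((hasDerivAt_id x).sub_const (t/2))
  have hv : ∀ x : ℝ, HasDerivAt (fun x:ℝ => ((h (x - t/2) : ℝ) : ℂ))
      ((deriv h (x - t/2) : ℝ) : ℂ) x := fun x => (hvr x).ofReal_comp
  -- continuity
  have hcu : Continuous (fun x:ℝ => Complex.log (2*(x:ℂ) - c)) :=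
    continuous_iff_continuousAt.mpr fun x => (hu x).continuousAt
  have hcu' : Continuous (fun x:ℝ => (2:ℂ)/(2*(x:ℂ)-c)) := by
    refine continuous_const.div ?_ hne
    exact (continuous_const.mul Complex.continuous_ofReal).sub continuous_const
  have hcv : Continuous (fun x:ℝ => ((h (x - t/2) : ℝ) : ℂ)) :=
    Complex.continuous_ofReal.comp ((hsmooth.continuous).comp (continuous_id.sub continuous_const))
  have hcv' : Continuous (fun x:ℝ => ((deriv h (x - t/2) : ℝ) : ℂ)) :=
    Complex.continuous_ofReal.comp
      ((hsmooth.continuous_deriv (by simp)).comp (continuous_id.sub continuous_const))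
  -- compact support
  have hsv0 : HasCompactSupport (fun x:ℝ => h (x - t/2)) :=
    hsupp.comp_homeomorph (Homeomorph.subRight (t/2))
  have hsv : HasCompactSupport (fun x:ℝ => ((h (x - t/2) : ℝ) : ℂ)) :=
    hsv0.comp_left (g := fun r : ℝ => (r:ℂ)) Complex.ofReal_zero
  have hsv'0 : HasCompactSupport (fun x:ℝ => deriv h (x - t/2)) :=
    (hsupp.deriv).comp_homeomorph (Homeomorph.subRight (t/2))
  have hsv' : HasCompactSupport (fun x:ℝ => ((deriv h (x - t/2) : ℝ) : ℂ)) :=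
    hsv'0.comp_left (g := fun r : ℝ => (r:ℂ)) Complex.ofReal_zero
  -- integrability
  have huv' : Integrable ((fun x:ℝ => Complex.log (2*(x:ℂ) - c)) *
      (fun x:ℝ => ((deriv h (x - t/2) : ℝ) : ℂ))) :=
    (hcu.mul hcv').integrable_of_hasCompactSupport (hsv'.mul_left)
  have hu'v : Integrable ((fun x:ℝ => (2:ℂ)/(2*(x:ℂ)-c)) *
      (fun x:ℝ => ((h (x - t/2) : ℝ) : ℂ))) :=
    (hcu'.mul hcv).integrable_of_hasCompactSupport (hsv.mul_left)
  have huv : Integrable ((fun x:ℝ => Complex.log (2*(x:ℂ) - c)) *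
      (fun x:ℝ => ((h (x - t/2) : ℝ) : ℂ))) :=
    (hcu.mul hcv).integrable_of_hasCompactSupport (hsv.mul_left)
  have key := MeasureTheory.integral_mul_deriv_eq_deriv_mul_of_integrable (fun x _ => hu x) (fun x _ => hv x) huv' hu'v huv
  -- rewrite LHS via change of variables
  have hcov := MeasureTheory.integral_sub_right_eq_self (μ := volume)
    (fun s : ℝ => (h s : ℂ) / ((t : ℂ) ^ 2 + 2 * t * s - Complex.I * ε)) (t/2)
  calc ∫ s : ℝ, (h s : ℂ) / ((t : ℂ) ^ 2 + 2 * t * s - Complex.I * ε)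
      = ∫ x : ℝ, (h (x - t/2) : ℂ) /
          ((t : ℂ) ^ 2 + 2 * t * ((x:ℝ) - t/2 : ℝ) - Complex.I * ε) := hcov.symm
    _ = ∫ x : ℝ, -(1 / (2 * (t : ℂ))) * ((2:ℂ)/(2*(x:ℂ)-c) * ((h (x - t/2) : ℝ) : ℂ)) * (-1) := by
        refine integral_congr_ae (Filter.Eventually.of_forall fun x => ?_)
        have hxne := hne x
        have : ((t : ℂ) ^ 2 + 2 * t * ((x:ℝ) - t/2 : ℝ) - Complex.I * ε) = t * (2*(x:ℂ) - c) := by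
          push_cast
          rw [hc]
          ring_nf
          field_simp
        simp only [this]
        field_simp
    _ = -(1 / (2 * (t : ℂ))) *
        ∫ u : ℝ, Complex.log (2 * (u : ℂ) - Complex.I * ((ε : ℂ) / t)) *
          (↑(deriv h (u - t / 2)) : ℂ) := by
        rw [integral_mul_const, integral_const_mul, ← hc]
        have key' : (∫ x : ℝ, Complex.log (2*(x:ℂ) - c) * ((deriv h (x - t/2) : ℝ) : ℂ))
            = - ∫ x : ℝ, (2:ℂ)/(2*(x:ℂ)-c) * ((h (x - t/2) : ℝ) : ℂ) := key
        rw [key']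
        ring
end

section
/- Let a > 0 and let h : ℝ → ℝ be smooth with compact support contained in (-a,a). Then there is a constant C > 0 such that for every ρ with 0 < |ρ - 2| ≤ 1, | ∫_{-a}^{a} log| (ρ - 2 + s²)/s² | · h(s) ds | ≤ C · √|ρ - 2|. -/
open MeasureTheory intervalIntegral Real Set
open scoped Interval

lemma rpow_half_add_le {x y : ℝ} (hx : 0 ≤ x) (hy : 0 ≤ y) :
    (x + y) ^ ((1:ℝ)/2) ≤ x ^ ((1:ℝ)/2) + y ^ ((1:ℝ)/2) := by
  have h2 : ∀ z : ℝ, 0 ≤ z → (z ^ ((1:ℝ)/2)) ^ 2 = z := by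
    intro z hz
    rw [← Real.rpow_natCast (z ^ ((1:ℝ)/2)) 2, ← Real.rpow_mul hz]
    norm_num
  have hxy : 0 ≤ x ^ ((1:ℝ)/2) := Real.rpow_nonneg hx _
  have hyy : 0 ≤ y ^ ((1:ℝ)/2) := Real.rpow_nonneg hy _
  have key : x + y ≤ (x ^ ((1:ℝ)/2) + y ^ ((1:ℝ)/2)) ^ 2 := by
    nlinarith [h2 x hx, h2 y hy, mul_nonneg hxy hyy]
  calc (x + y) ^ ((1:ℝ)/2) ≤ ((x ^ ((1:ℝ)/2) + y ^ ((1:ℝ)/2)) ^ 2) ^ ((1:ℝ)/2) :=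
        Real.rpow_le_rpow (by linarith) key (by norm_num)
    _ = x ^ ((1:ℝ)/2) + y ^ ((1:ℝ)/2) := by
        rw [← Real.rpow_natCast (x ^ ((1:ℝ)/2) + y ^ ((1:ℝ)/2)) 2, ← Real.rpow_mul (by positivity)]
        norm_num

lemma abs_log_le_rpow {u : ℝ} (hu : 0 ≤ u) :
    |Real.log u| ≤ 4 * u ^ ((1:ℝ)/4) + 4 * u ^ (-((1:ℝ)/4)) := by
  rcases hu.eq_or_lt with h | h
  · rw [← h, Real.log_zero, Real.zero_rpow (by norm_num), Real.zero_rpow (by norm_num)]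
    norm_num
  · have h1 : 0 < u ^ ((1:ℝ)/4) := Real.rpow_pos_of_pos h _
    have h2 : 0 < u ^ (-((1:ℝ)/4)) := Real.rpow_pos_of_pos h _
    have e1 : Real.log (u ^ ((1:ℝ)/4)) = (1/4) * Real.log u := Real.log_rpow h _
    have e2 : Real.log (u ^ (-((1:ℝ)/4))) = (-(1/4)) * Real.log u := Real.log_rpow h _
    have i1 : Real.log (u ^ ((1:ℝ)/4)) ≤ u ^ ((1:ℝ)/4) - 1 := Real.log_le_sub_one_of_pos h1
    have i2 : Real.log (u ^ (-((1:ℝ)/4))) ≤ u ^ (-((1:ℝ)/4)) - 1 := Real.log_le_sub_one_of_pos h2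
    rw [abs_le]
    constructor <;> nlinarith [h1.le, h2.le]

lemma abs_log_le_two_mul {u : ℝ} (hu : 1/2 ≤ u) : |Real.log u| ≤ 2 * |u - 1| := by
  have hu0 : 0 < u := by linarith
  rcases le_or_gt 1 u with h | h
  · rw [abs_of_nonneg (Real.log_nonneg h), abs_of_nonneg (by linarith)]
    have := Real.log_le_sub_one_of_pos hu0
    linarith
  · rw [abs_of_nonpos (Real.log_nonpos (by linarith) h.le), abs_of_nonpos (by linarith)]
    have h1 : Real.log u⁻¹ ≤ u⁻¹ - 1 := Real.log_le_sub_one_of_pos (by positivity)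
    rw [Real.log_inv] at h1
    have h2 : u⁻¹ ≤ 3 - 2*u := by
      rw [inv_eq_one_div, div_le_iff₀ hu0]
      nlinarith
    linarith

lemma II_abs_rpow {r : ℝ} (hr : -1 < r) (u v : ℝ) :
    IntervalIntegrable (fun x : ℝ => |x| ^ r) volume u v := by
  have key : ∀ c : ℝ, 0 ≤ c → IntervalIntegrable (fun x : ℝ => |x| ^ r) volume 0 c := by
    intro c hc
    rw [intervalIntegrable_iff_integrableOn_Ioc_of_le hc]
    have h1 : IntegrableOn (fun x : ℝ => x ^ r) (Ioc 0 c) volume := by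
      rw [← intervalIntegrable_iff_integrableOn_Ioc_of_le hc]
      exact intervalIntegrable_rpow' hr
    exact h1.congr_fun (fun x hx => by rw [abs_of_pos hx.1]) measurableSet_Ioc
  have any0 : ∀ w : ℝ, IntervalIntegrable (fun x : ℝ => |x| ^ r) volume 0 w := by
    intro w
    rcases le_or_gt 0 w with hw | hw
    · exact key w hw
    · have h0 := (IntervalIntegrable.iff_comp_neg (by simp)).mp (key (-w) (by linarith))
      simp only [abs_neg, neg_zero, neg_neg] at h0
      exact h0
  exact (any0 u).symm.trans (any0 v)

lemma int_abs_rpow {r : ℝ} (hr : -1 < r) {u v : ℝ} (hu : u ≤ 0) (hv : 0 ≤ v) :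
    ∫ x in u..v, |x| ^ r = (v ^ (r+1) + (-u) ^ (r+1)) / (r+1) := by
  have hr1 : r + 1 ≠ 0 := by linarith
  have e1 : ∀ c : ℝ, 0 ≤ c → ∫ x in (0:ℝ)..c, |x| ^ r = c ^ (r+1) / (r+1) := by
    intro c hc
    rw [integral_congr (g := fun x : ℝ => x ^ r) ?_, integral_rpow (Or.inl hr)]
    · rw [Real.zero_rpow hr1]; ring
    · intro x hx
      rw [uIcc_of_le hc] at hx
      simp only
      rw [abs_of_nonneg hx.1]
  have e2 : ∫ x in u..(0:ℝ), |x| ^ r = (-u) ^ (r+1) / (r+1) := by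
    have hcn := integral_comp_neg (a := (0:ℝ)) (b := -u) (fun x : ℝ => |x| ^ r)
    simp only [abs_neg, neg_neg, neg_zero] at hcn
    rw [← hcn, e1 (-u) (by linarith)]
  rw [← integral_add_adjacent_intervals (II_abs_rpow hr u 0) (II_abs_rpow hr 0 v), e2, e1 v hv]
  ring

lemma II_abs_sub_rpow {r : ℝ} (hr : -1 < r) (c u v : ℝ) :
    IntervalIntegrable (fun x : ℝ => |x - c| ^ r) volume u v := by
  have h0 := (II_abs_rpow hr (u - c) (v - c)).comp_sub_right c
  simpa using h0

lemma int_abs_sub_rpow {r : ℝ} (hr : -1 < r) {c u v : ℝ} (huc : u ≤ c) (hcv : c ≤ v) :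
    ∫ x in u..v, |x - c| ^ r = ((v - c) ^ (r+1) + (c - u) ^ (r+1)) / (r+1) := by
  rw [show (∫ x in u..v, |x - c| ^ r) = ∫ x in (u - c)..(v - c), |x| ^ r from
    integral_comp_sub_right (fun t : ℝ => |t| ^ r) c]
  rw [int_abs_rpow hr (by linarith) (by linarith), neg_sub]


lemma tail_bound {δ ε s : ℝ} (hδ0 : 0 < δ) (hδsq : δ^2 = |ε|) (hs : 2*δ ≤ |s|) :
    |Real.log (|(ε + s^2)/s^2|)| ≤ 2*δ^2 * (s^2)⁻¹ := by
  have hs0 : 0 < |s| := lt_of_lt_of_le (by positivity) hs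
  have hsne : s ≠ 0 := abs_pos.mp hs0
  have hss : 0 < s^2 := by positivity
  have hs4 : 4*δ^2 ≤ s^2 := by nlinarith [sq_abs s]
  have hεl : -(δ^2) ≤ ε := by rw [hδsq]; exact neg_abs_le ε
  have hεu : ε ≤ δ^2 := by rw [hδsq]; exact le_abs_self ε
  have hpos : 0 < ε + s^2 := by nlinarith
  rw [abs_of_pos (div_pos hpos hss)]
  have hw : 1/2 ≤ (ε + s^2)/s^2 := by rw [le_div_iff₀ hss]; nlinarith
  apply le_trans (abs_log_le_two_mul hw)
  have he : (ε + s^2)/s^2 - 1 = ε/s^2 := by field_simp; ring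
  rw [he, abs_div, abs_of_pos hss, ← hδsq, div_eq_mul_inv]
  ring_nf
  exact le_refl _

set_option maxHeartbeats 1000000 in
lemma center_bound {δ ε s : ℝ} (hδ0 : 0 < δ) (hδsq : δ^2 = |ε|) (hε : ε ≠ 0)
    (hs : |s| ≤ 2*δ) (hs0 : s ≠ 0) (hs1 : s ≠ δ) (hs2 : s ≠ -δ) :
    |Real.log (|(ε + s^2)/s^2|)| ≤
      4 + 4*δ^((1:ℝ)/2) * |s| ^ (-((1:ℝ)/2))
        + 16*δ^((1:ℝ)/4) * (|s - δ| ^ (-((1:ℝ)/4)) + |s + δ| ^ (-((1:ℝ)/4))) := by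
  have hss : 0 < s^2 := by positivity
  have hne : ε + s^2 ≠ 0 := by
    intro h0
    have h1 : |ε| = s^2 := by
      rw [show ε = -s^2 by linarith, abs_neg, abs_of_nonneg hss.le]
    have h2 : (s - δ)*(s + δ) = 0 := by nlinarith [hδsq, h1]
    rcases mul_eq_zero.mp h2 with h3 | h3
    · exact hs1 (by linarith)
    · exact hs2 (by linarith)
  have hu0 : 0 < |(ε + s^2)/s^2| := abs_pos.mpr (div_ne_zero hne (ne_of_gt hss))
  set u := |(ε + s^2)/s^2| with hu
  have hu_eq : u = |ε + s^2| / s^2 := by rw [hu, abs_div, abs_of_pos hss]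
  apply le_trans (abs_log_le_rpow hu0.le)
  have hden : (s^2 : ℝ) ^ ((1:ℝ)/4) = |s| ^ ((1:ℝ)/2) := by
    rw [← sq_abs, ← Real.rpow_natCast |s| 2, ← Real.rpow_mul (abs_nonneg s)]
    norm_num
  have hd0 : 0 < |s| ^ ((1:ℝ)/2) := Real.rpow_pos_of_pos (abs_pos.mpr hs0) _
  have B1 : u ^ ((1:ℝ)/4) ≤ 1 + δ^((1:ℝ)/2) * |s| ^ (-((1:ℝ)/2)) := by
    have habs : |ε + s^2| ≤ δ^2 + s^2 := by
      calc |ε + s^2| ≤ |ε| + |s^2| := abs_add_le _ _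
        _ = δ^2 + s^2 := by rw [← hδsq, abs_of_nonneg hss.le]
    have h_u_le : u ≤ (δ^2 + s^2)/s^2 := by rw [hu_eq]; gcongr
    have hnum : (δ^2 + s^2) ^ ((1:ℝ)/4) ≤ δ^((1:ℝ)/2) + |s|^((1:ℝ)/2) := by
      have h1 : δ^2 + s^2 ≤ (δ + |s|)^2 := by nlinarith [abs_nonneg s, sq_abs s]
      calc (δ^2 + s^2) ^ ((1:ℝ)/4) ≤ ((δ + |s|)^2) ^ ((1:ℝ)/4) :=
            Real.rpow_le_rpow (by positivity) h1 (by norm_num)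
        _ = (δ + |s|) ^ ((1:ℝ)/2) := by
            rw [← Real.rpow_natCast (δ + |s|) 2, ← Real.rpow_mul (by positivity)]
            norm_num
        _ ≤ δ^((1:ℝ)/2) + |s|^((1:ℝ)/2) := rpow_half_add_le hδ0.le (abs_nonneg s)
    calc u ^ ((1:ℝ)/4) ≤ ((δ^2 + s^2)/s^2) ^ ((1:ℝ)/4) :=
          Real.rpow_le_rpow hu0.le h_u_le (by norm_num)
      _ = (δ^2 + s^2) ^ ((1:ℝ)/4) / |s| ^ ((1:ℝ)/2) := by
          rw [Real.div_rpow (by positivity) hss.le, hden]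
      _ ≤ (δ^((1:ℝ)/2) + |s|^((1:ℝ)/2)) / |s| ^ ((1:ℝ)/2) := by gcongr
      _ = 1 + δ^((1:ℝ)/2) * |s| ^ (-((1:ℝ)/2)) := by
          rw [add_div, div_self hd0.ne', Real.rpow_neg (abs_nonneg s), div_eq_mul_inv, add_comm]
  have main : ∀ w : ℝ, 0 < w → δ/2 * w ≤ |ε + s^2| →
      u ^ (-((1:ℝ)/4)) ≤ 4 * δ^((1:ℝ)/4) * w ^ (-((1:ℝ)/4)) := by
    intro w hw hle
    have hu14 : u ^ (-((1:ℝ)/4)) = (s^2:ℝ)^((1:ℝ)/4) / |ε + s^2|^((1:ℝ)/4) := by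
      rw [hu_eq, Real.rpow_neg (by positivity), Real.div_rpow (abs_nonneg _) hss.le, inv_div]
    have h2q : (2:ℝ)^((1:ℝ)/4) ≤ 2 := by
      calc (2:ℝ)^((1:ℝ)/4) ≤ (2:ℝ)^(1:ℝ) :=
            Real.rpow_le_rpow_of_exponent_le (by norm_num) (by norm_num)
        _ = 2 := Real.rpow_one 2
    have hnum : (s^2:ℝ)^((1:ℝ)/4) ≤ 2 * δ^((1:ℝ)/2) := by
      rw [hden]
      calc |s|^((1:ℝ)/2) ≤ (2*δ)^((1:ℝ)/2) := Real.rpow_le_rpow (abs_nonneg s) hs (by norm_num)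
        _ = 2^((1:ℝ)/2) * δ^((1:ℝ)/2) := Real.mul_rpow (by norm_num) hδ0.le
        _ ≤ 2 * δ^((1:ℝ)/2) := by
            have hq : (2:ℝ)^((1:ℝ)/2) ≤ 2 := by
              calc (2:ℝ)^((1:ℝ)/2) ≤ (2:ℝ)^(1:ℝ) :=
                    Real.rpow_le_rpow_of_exponent_le (by norm_num) (by norm_num)
                _ = 2 := Real.rpow_one 2
            exact mul_le_mul_of_nonneg_right hq (Real.rpow_nonneg hδ0.le _)
    have hdpos : 0 < (δ/2 * w)^((1:ℝ)/4) := Real.rpow_pos_of_pos (by positivity) _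
    have hden2 : (δ/2 * w)^((1:ℝ)/4) ≤ |ε + s^2|^((1:ℝ)/4) :=
      Real.rpow_le_rpow (by positivity) hle (by norm_num)
    have step : u ^ (-((1:ℝ)/4)) ≤ 2 * δ^((1:ℝ)/2) / (δ/2 * w)^((1:ℝ)/4) := by
      rw [hu14]
      exact div_le_div₀ (by positivity) hnum hdpos hden2
    apply step.trans
    have hP : 0 < δ^((1:ℝ)/4) := Real.rpow_pos_of_pos hδ0 _
    have hW : 0 < w^((1:ℝ)/4) := Real.rpow_pos_of_pos hw _
    have hQ : 0 < (2:ℝ)^((1:ℝ)/4) := Real.rpow_pos_of_pos (by norm_num) _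
    have e1 : (δ/2 * w)^((1:ℝ)/4) = δ^((1:ℝ)/4) / 2^((1:ℝ)/4) * w^((1:ℝ)/4) := by
      rw [Real.mul_rpow (by positivity) hw.le, Real.div_rpow hδ0.le (by norm_num)]
    have e2 : δ^((1:ℝ)/2) = δ^((1:ℝ)/4) * δ^((1:ℝ)/4) := by
      rw [← Real.rpow_add hδ0]; norm_num
    rw [e1, e2, Real.rpow_neg hw.le]
    have e3 : 2*(δ^((1:ℝ)/4)*δ^((1:ℝ)/4)) / (δ^((1:ℝ)/4)/2^((1:ℝ)/4) * w^((1:ℝ)/4))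
        = 2*2^((1:ℝ)/4)*δ^((1:ℝ)/4)/w^((1:ℝ)/4) := by
      field_simp
    rw [e3, div_le_iff₀ hW]
    have e4 : 4*δ^((1:ℝ)/4)*(w^((1:ℝ)/4))⁻¹*w^((1:ℝ)/4) = 4*δ^((1:ℝ)/4) := by
      field_simp
    rw [e4]
    nlinarith [hP.le, hQ.le]
  have hterm1 : (0:ℝ) ≤ |s - δ| ^ (-((1:ℝ)/4)) := Real.rpow_nonneg (abs_nonneg _) _
  have hterm2 : (0:ℝ) ≤ |s + δ| ^ (-((1:ℝ)/4)) := Real.rpow_nonneg (abs_nonneg _) _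
  have hPd : (0:ℝ) ≤ δ^((1:ℝ)/4) := Real.rpow_nonneg hδ0.le _
  have B2 : u ^ (-((1:ℝ)/4)) ≤
      4*δ^((1:ℝ)/4) * (|s - δ| ^ (-((1:ℝ)/4)) + |s + δ| ^ (-((1:ℝ)/4))) := by
    rcases le_or_gt 0 s with hsp | hsn
    · have hkey : δ/2 * |s - δ| ≤ |ε + s^2| := by
        rcases hε.lt_or_gt with hen | hep
        · have heval : ε = -(δ^2) := by
            have h9 := hδsq; rw [abs_of_neg hen] at h9; linarith
          have hfac : ε + s^2 = (s - δ)*(s + δ) := by rw [heval]; ring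
          rw [hfac, abs_mul]
          have h1 : δ ≤ |s + δ| := by rw [abs_of_nonneg (by linarith)]; linarith
          nlinarith [abs_nonneg (s - δ)]
        · have heval : ε = δ^2 := by
            have h9 := hδsq; rw [abs_of_pos hep] at h9; linarith
          rw [heval, abs_of_pos (by nlinarith [pow_pos hδ0 2] : (0:ℝ) < δ^2 + s^2)]
          have habs2 : |s - δ| ≤ |s| + δ := by
            calc |s - δ| ≤ |s| + |δ| := abs_sub s δ
              _ = |s| + δ := by rw [abs_of_pos hδ0]
          nlinarith [mul_le_mul_of_nonneg_left habs2 (by positivity : (0:ℝ) ≤ δ/2),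
            sq_nonneg (δ - |s|), sq_abs s]
      have hm := main _ (abs_pos.mpr (sub_ne_zero.mpr hs1)) hkey
      calc u ^ (-((1:ℝ)/4)) ≤ 4*δ^((1:ℝ)/4) * |s - δ| ^ (-((1:ℝ)/4)) := hm
        _ ≤ 4*δ^((1:ℝ)/4) * (|s - δ| ^ (-((1:ℝ)/4)) + |s + δ| ^ (-((1:ℝ)/4))) :=
            mul_le_mul_of_nonneg_left (le_add_of_nonneg_right hterm2) (by positivity)
    · have hkey : δ/2 * |s + δ| ≤ |ε + s^2| := by
        rcases hε.lt_or_gt with hen | hep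
        · have heval : ε = -(δ^2) := by
            have h9 := hδsq; rw [abs_of_neg hen] at h9; linarith
          have hfac : ε + s^2 = (s + δ)*(s - δ) := by rw [heval]; ring
          rw [hfac, abs_mul]
          have h1 : δ ≤ |s - δ| := by rw [abs_of_nonpos (by linarith)]; linarith
          nlinarith [abs_nonneg (s + δ)]
        · have heval : ε = δ^2 := by
            have h9 := hδsq; rw [abs_of_pos hep] at h9; linarith
          rw [heval, abs_of_pos (by nlinarith [pow_pos hδ0 2] : (0:ℝ) < δ^2 + s^2)]
          have habs2 : |s + δ| ≤ |s| + δ := by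
            calc |s + δ| ≤ |s| + |δ| := abs_add_le s δ
              _ = |s| + δ := by rw [abs_of_pos hδ0]
          nlinarith [mul_le_mul_of_nonneg_left habs2 (by positivity : (0:ℝ) ≤ δ/2),
            sq_nonneg (δ - |s|), sq_abs s]
      have hm := main _ (abs_pos.mpr (fun h0 => hs2 (by linarith))) hkey
      calc u ^ (-((1:ℝ)/4)) ≤ 4*δ^((1:ℝ)/4) * |s + δ| ^ (-((1:ℝ)/4)) := hm
        _ ≤ 4*δ^((1:ℝ)/4) * (|s - δ| ^ (-((1:ℝ)/4)) + |s + δ| ^ (-((1:ℝ)/4))) :=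
            mul_le_mul_of_nonneg_left (le_add_of_nonneg_left hterm1) (by positivity)
  linarith [B1, B2]


set_option maxHeartbeats 1600000 in
theorem stmt_12 (a : ℝ) (ha : 0 < a) (h : ℝ → ℝ) (hsmooth : ContDiff ℝ (⊤ : ℕ∞) h)
    (hsupp : HasCompactSupport h) (hsub : tsupport h ⊆ Set.Ioo (-a) a) :
    ∃ C > 0, ∀ ρ : ℝ, 0 < |ρ - 2| → |ρ - 2| ≤ 1 →
      |∫ s in (-a)..a, Real.log (|(ρ - 2 + s ^ 2) / s ^ 2|) * h s| ≤
        C * Real.sqrt (|ρ - 2|) := by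
  obtain ⟨M, hM⟩ := hsupp.exists_bound_of_continuous hsmooth.continuous
  have hM0 : 0 ≤ M := le_trans (norm_nonneg (h 0)) (hM 0)
  refine ⟨300 * (M + 1), by positivity, ?_⟩
  intro ρ hρ0 hρ1
  set ε := ρ - 2 with hε
  set δ := Real.sqrt |ε| with hδ
  have hδ0 : 0 < δ := Real.sqrt_pos.mpr hρ0
  have hδsq : δ ^ 2 = |ε| := Real.sq_sqrt (abs_nonneg ε)
  have hδ1 : δ ≤ 1 := by
    rw [hδ, show (1:ℝ) = Real.sqrt 1 by rw [Real.sqrt_one] ]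
    exact Real.sqrt_le_sqrt hρ1
  have hεne : ε ≠ 0 := by
    intro h0
    rw [h0] at hρ0
    simp at hρ0
  set A := a + 2 with hA
  have haA : a ≤ A := by linarith
  have h2δA : 2*δ ≤ A := by linarith
  set F : ℝ → ℝ := fun s => Real.log (|(ε + s ^ 2) / s ^ 2|) * h s with hF
  -- measurability
  have hmeasF : ∀ μ' : Measure ℝ, AEStronglyMeasurable F μ' := by
    intro μ'
    apply Measurable.aestronglyMeasurable
    apply Measurable.mul ?_ hsmooth.continuous.measurable
    apply Real.measurable_log.comp
    apply Measurable.abs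
    exact (measurable_const.add (measurable_id.pow_const 2)).div (measurable_id.pow_const 2)
  -- tail continuity / integrability
  have hcont_tail : ∀ b c : ℝ, (∀ x ∈ uIcc b c, 2*δ ≤ |x|) → IntervalIntegrable F volume b c := by
    intro b c hbc
    apply ContinuousOn.intervalIntegrable
    have hx0 : ∀ x ∈ uIcc b c, x ≠ 0 := by
      intro x hx h0
      have h1 := hbc x hx
      rw [h0] at h1
      simp at h1
      linarith
    have h1 : ContinuousOn (fun s : ℝ => (ε + s ^ 2) / s ^ 2) (uIcc b c) := by
      apply ContinuousOn.div (continuousOn_const.add ((continuous_pow 2).continuousOn))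
        ((continuous_pow 2).continuousOn)
      intro x hx
      exact pow_ne_zero 2 (hx0 x hx)
    have h2 : ContinuousOn (fun s : ℝ => Real.log (|(ε + s ^ 2) / s ^ 2|)) (uIcc b c) := by
      apply ContinuousOn.log h1.abs
      intro x hx
      have h3 := hbc x hx
      have hxne : x ≠ 0 := hx0 x hx
      have hss : 0 < x^2 := by positivity
      have hpos : 0 < ε + x^2 := by nlinarith [sq_abs x, neg_abs_le ε, hδsq, hδ0]
      exact ne_of_gt (abs_pos.mpr (div_ne_zero (ne_of_gt hpos) (ne_of_gt hss)))
    exact h2.mul hsmooth.continuous.continuousOn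
  have hF_r : IntervalIntegrable F volume (2*δ) A := by
    apply hcont_tail
    intro x hx
    rw [uIcc_of_le h2δA] at hx
    exact le_trans hx.1 (le_abs_self x)
  have hF_l : IntervalIntegrable F volume (-A) (-(2*δ)) := by
    apply hcont_tail
    intro x hx
    rw [uIcc_of_le (by linarith : -A ≤ -(2*δ))] at hx
    calc 2*δ ≤ -x := by linarith [hx.2]
      _ ≤ |x| := neg_le_abs x
  -- center majorant
  set Fc : ℝ → ℝ := fun s => M * (4 + 4*δ^((1:ℝ)/2) * |s| ^ (-((1:ℝ)/2))
      + 16*δ^((1:ℝ)/4) * (|s - δ| ^ (-((1:ℝ)/4)) + |s + δ| ^ (-((1:ℝ)/4)))) with hFc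
  have hint1 : IntervalIntegrable (fun s : ℝ => |s| ^ (-((1:ℝ)/2))) volume (-(2*δ)) (2*δ) :=
    II_abs_rpow (by norm_num) _ _
  have hint2 : IntervalIntegrable (fun s : ℝ => |s - δ| ^ (-((1:ℝ)/4))) volume (-(2*δ)) (2*δ) :=
    II_abs_sub_rpow (by norm_num) _ _ _
  have hint3 : IntervalIntegrable (fun s : ℝ => |s + δ| ^ (-((1:ℝ)/4))) volume (-(2*δ)) (2*δ) := by
    have h0 := II_abs_sub_rpow (by norm_num : (-1:ℝ) < -((1:ℝ)/4)) (-δ) (-(2*δ)) (2*δ)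
    simpa [sub_neg_eq_add] using h0
  have hFc_int : IntervalIntegrable Fc volume (-(2*δ)) (2*δ) := by
    rw [hFc]
    apply IntervalIntegrable.const_mul
    exact (intervalIntegrable_const.add (hint1.const_mul _)).add ((hint2.add hint3).const_mul _)
  have hae_c : ∀ᵐ s ∂(volume.restrict (Ioc (-(2*δ)) (2*δ))), ‖F s‖ ≤ Fc s := by
    have hzero : ∀ᵐ s ∂(volume : Measure ℝ), s ∉ ({0, δ, -δ} : Set ℝ) := by
      rw [← measure_eq_zero_iff_ae_notMem]
      exact Set.Finite.measure_zero (Set.toFinite _) _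
    filter_upwards [ae_restrict_of_ae hzero, ae_restrict_mem measurableSet_Ioc] with s hs1 hs2
    simp only [Set.mem_insert_iff, Set.mem_singleton_iff, not_or] at hs1
    obtain ⟨hs0, hsd1, hsd2⟩ := hs1
    have hsabs : |s| ≤ 2*δ := by
      rw [abs_le]
      exact ⟨by linarith [hs2.1], hs2.2⟩
    have hb := center_bound hδ0 hδsq hεne hsabs hs0 hsd1 hsd2
    calc ‖F s‖ = |Real.log (|(ε + s ^ 2) / s ^ 2|)| * |h s| := by
          rw [hF, Real.norm_eq_abs, abs_mul]
      _ ≤ (4 + 4*δ^((1:ℝ)/2) * |s| ^ (-((1:ℝ)/2))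
            + 16*δ^((1:ℝ)/4) * (|s - δ| ^ (-((1:ℝ)/4)) + |s + δ| ^ (-((1:ℝ)/4)))) * M := by
          apply mul_le_mul hb ?_ (abs_nonneg _) (by positivity)
          rw [← Real.norm_eq_abs]
          exact hM s
      _ = Fc s := by rw [hFc]; ring
  have hF_c : IntervalIntegrable F volume (-(2*δ)) (2*δ) := by
    rw [intervalIntegrable_iff_integrableOn_Ioc_of_le (by linarith : -(2*δ) ≤ 2*δ)]
    exact Integrable.mono'
      ((intervalIntegrable_iff_integrableOn_Ioc_of_le (by linarith : -(2*δ) ≤ 2*δ)).mp hFc_int)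
      (hmeasF _) hae_c
  have hF_full : IntervalIntegrable F volume (-A) A := (hF_l.trans hF_c).trans hF_r
  -- extension
  have hout : ∀ s : ℝ, s ∉ Set.Ioo (-a) a → F s = 0 := by
    intro s hs
    have h0 : h s = 0 := image_eq_zero_of_notMem_tsupport (fun hmem => hs (hsub hmem))
    rw [hF]
    simp [h0]
  have hz_r : ∫ s in a..A, F s = 0 := by
    rw [integral_congr (g := fun _ => (0:ℝ)) ?_, intervalIntegral.integral_zero]
    intro x hx
    rw [uIcc_of_le haA] at hx
    exact hout x (fun hmem => absurd hmem.2 (not_lt.mpr hx.1))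
  have hz_l : ∫ s in (-A)..(-a), F s = 0 := by
    rw [integral_congr (g := fun _ => (0:ℝ)) ?_, intervalIntegral.integral_zero]
    intro x hx
    rw [uIcc_of_le (by linarith : -A ≤ -a)] at hx
    exact hout x (fun hmem => absurd hmem.1 (not_lt.mpr (by linarith [hx.2])))
  have hsub1 : IntervalIntegrable F volume (-A) (-a) := by
    apply hF_full.mono_set
    rw [uIcc_of_le (by linarith : -A ≤ -a), uIcc_of_le (by linarith : -A ≤ A)]
    exact Icc_subset_Icc (le_refl _) (by linarith)
  have hsub2 : IntervalIntegrable F volume (-a) a := by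
    apply hF_full.mono_set
    rw [uIcc_of_le (by linarith : -a ≤ a), uIcc_of_le (by linarith : -A ≤ A)]
    exact Icc_subset_Icc (by linarith) (by linarith)
  have hsub3 : IntervalIntegrable F volume a A := by
    apply hF_full.mono_set
    rw [uIcc_of_le haA, uIcc_of_le (by linarith : -A ≤ A)]
    exact Icc_subset_Icc (by linarith) (le_refl _)
  have hext : ∫ s in (-a)..a, F s = ∫ s in (-A)..A, F s := by
    rw [← integral_add_adjacent_intervals (hsub1.trans hsub2) hsub3,
        ← integral_add_adjacent_intervals hsub1 hsub2, hz_l, hz_r]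
    ring
  have hsplit : ∫ s in (-A)..A, F s =
      ((∫ s in (-A)..(-(2*δ)), F s) + ∫ s in (-(2*δ))..(2*δ), F s) + ∫ s in (2*δ)..A, F s := by
    rw [integral_add_adjacent_intervals hF_l hF_c,
        integral_add_adjacent_intervals (hF_l.trans hF_c) hF_r]
  -- tail majorant integral
  have hmaj_cont : ∀ b c : ℝ, (0 ∉ uIcc b c) →
      IntervalIntegrable (fun s : ℝ => M * (2*δ^2 * (s^2)⁻¹)) volume b c := by
    intro b c hbc
    apply ContinuousOn.intervalIntegrable
    apply ContinuousOn.mul continuousOn_const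
    apply ContinuousOn.mul continuousOn_const
    apply ContinuousOn.inv₀ (continuous_pow 2).continuousOn
    intro x hx
    exact pow_ne_zero 2 (fun h0 => hbc (h0 ▸ hx))
  have hval_r : ∫ s in (2*δ)..A, ((s:ℝ)^2)⁻¹ = (2*δ)⁻¹ - A⁻¹ := by
    rw [integral_congr (g := fun s : ℝ => s ^ (-2:ℤ)) ?_]
    · rw [integral_zpow (Or.inr ⟨by norm_num, by
        rw [uIcc_of_le h2δA]
        intro hmem
        have := hmem.1
        linarith⟩)]
      norm_num
      ring
    · intro x _
      simp [zpow_neg]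
  have hval_l : ∫ s in (-A)..(-(2*δ)), ((s:ℝ)^2)⁻¹ = (2*δ)⁻¹ - A⁻¹ := by
    have hcn := integral_comp_neg (a := 2*δ) (b := A) (fun s : ℝ => ((s:ℝ)^2)⁻¹)
    simp only [neg_sq] at hcn
    rw [← hcn, hval_r]
  have hinv : A⁻¹ ≤ (2*δ)⁻¹ := by
    apply inv_anti₀ (by positivity) h2δA
  have hinner : 2*δ^2*((2*δ)⁻¹ - A⁻¹) ≤ δ := by
    have hA0 : (0:ℝ) < A := by linarith
    have he : 2*δ^2*(2*δ)⁻¹ = δ := by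
      field_simp
    have hnn : 0 ≤ 2*δ^2*A⁻¹ := by positivity
    nlinarith
  have hinner0 : 0 ≤ 2*δ^2*((2*δ)⁻¹ - A⁻¹) := by
    have : 0 ≤ (2*δ)⁻¹ - A⁻¹ := by linarith
    positivity
  -- bound tails
  have htail_ae : ∀ b c : ℝ, (∀ x ∈ Ι b c, 2*δ ≤ |x|) →
      ∀ᵐ t ∂(volume.restrict (Ι b c)), ‖F t‖ ≤ M * (2*δ^2 * (t^2)⁻¹) := by
    intro b c hbc
    filter_upwards [ae_restrict_mem measurableSet_uIoc] with s hs
    have habs := hbc s hs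
    have htb := tail_bound hδ0 hδsq habs
    calc ‖F s‖ = |Real.log (|(ε + s ^ 2) / s ^ 2|)| * |h s| := by
          rw [hF, Real.norm_eq_abs, abs_mul]
      _ ≤ (2*δ^2 * (s^2)⁻¹) * M := by
          apply mul_le_mul htb ?_ (abs_nonneg _) (by positivity)
          rw [← Real.norm_eq_abs]
          exact hM s
      _ = M * (2*δ^2 * (s^2)⁻¹) := by ring
  have hb_r : |∫ s in (2*δ)..A, F s| ≤ M * δ := by
    have hb1 := intervalIntegral.norm_integral_le_of_norm_le h2δA
      (by
        have h0 := htail_ae (2*δ) A (by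
          intro x hx
          rw [uIoc_of_le h2δA] at hx
          exact le_trans hx.1.le (le_abs_self x))
        rw [uIoc_of_le h2δA] at h0
        exact (ae_restrict_iff' measurableSet_Ioc).mp h0)
      (hmaj_cont (2*δ) A (by
        rw [uIcc_of_le h2δA]
        intro hmem
        linarith [hmem.1]))
    rw [Real.norm_eq_abs] at hb1
    apply hb1.trans
    rw [intervalIntegral.integral_const_mul, intervalIntegral.integral_const_mul, hval_r]
    exact mul_le_mul_of_nonneg_left hinner hM0
  have hb_l : |∫ s in (-A)..(-(2*δ)), F s| ≤ M * δ := by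
    have hb1 := intervalIntegral.norm_integral_le_of_norm_le (by linarith : -A ≤ -(2*δ))
      (by
        have h0 := htail_ae (-A) (-(2*δ)) (by
          intro x hx
          rw [uIoc_of_le (by linarith : -A ≤ -(2*δ))] at hx
          calc 2*δ ≤ -x := by linarith [hx.2]
            _ ≤ |x| := neg_le_abs x)
        rw [uIoc_of_le (by linarith : -A ≤ -(2*δ))] at h0
        exact (ae_restrict_iff' measurableSet_Ioc).mp h0)
      (hmaj_cont (-A) (-(2*δ)) (by
        rw [uIcc_of_le (by linarith : -A ≤ -(2*δ))]
        intro hmem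
        linarith [hmem.2]))
    rw [Real.norm_eq_abs] at hb1
    apply hb1.trans
    rw [intervalIntegral.integral_const_mul, intervalIntegral.integral_const_mul, hval_l]
    exact mul_le_mul_of_nonneg_left hinner hM0
  -- center piece
  have hI1 : ∫ s in (-(2*δ))..(2*δ), |s| ^ (-((1:ℝ)/2))
      = ((2*δ)^((1:ℝ)/2) + (2*δ)^((1:ℝ)/2)) / ((1:ℝ)/2) := by
    rw [int_abs_rpow (by norm_num) (by linarith) (by linarith)]
    norm_num
  have hI2 : ∫ s in (-(2*δ))..(2*δ), |s - δ| ^ (-((1:ℝ)/4))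
      = (δ^((3:ℝ)/4) + (3*δ)^((3:ℝ)/4)) / ((3:ℝ)/4) := by
    rw [int_abs_sub_rpow (by norm_num) (by linarith) (by linarith)]
    norm_num
    ring_nf
  have hI3 : ∫ s in (-(2*δ))..(2*δ), |s + δ| ^ (-((1:ℝ)/4))
      = ((3*δ)^((3:ℝ)/4) + δ^((3:ℝ)/4)) / ((3:ℝ)/4) := by
    have he : (fun s : ℝ => |s + δ| ^ (-((1:ℝ)/4))) = fun s : ℝ => |s - (-δ)| ^ (-((1:ℝ)/4)) := by
      funext s
      rw [sub_neg_eq_add]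
    rw [he, int_abs_sub_rpow (by norm_num) (by linarith) (by linarith)]
    norm_num
    ring_nf
  have hEval : ∫ s in (-(2*δ))..(2*δ), Fc s
      = M * (16*δ + 4*δ^((1:ℝ)/2) * (4*(2*δ)^((1:ℝ)/2))
          + 16*δ^((1:ℝ)/4) * ((8/3)*(δ^((3:ℝ)/4) + (3*δ)^((3:ℝ)/4)))) := by
    rw [hFc]
    rw [intervalIntegral.integral_const_mul,
      integral_add (intervalIntegrable_const.add (hint1.const_mul _)) ((hint2.add hint3).const_mul _),
      integral_add intervalIntegrable_const (hint1.const_mul _),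
      intervalIntegral.integral_const_mul, intervalIntegral.integral_const_mul, integral_add hint2 hint3,
      hI1, hI2, hI3, intervalIntegral.integral_const]
    simp only [smul_eq_mul]
    ring
  have hf1 : δ^((1:ℝ)/2)*δ^((1:ℝ)/2) = δ := by
    rw [← Real.rpow_add hδ0]
    norm_num
  have hf2 : δ^((1:ℝ)/4)*δ^((3:ℝ)/4) = δ := by
    rw [← Real.rpow_add hδ0]
    norm_num
  have hf3 : (2*δ)^((1:ℝ)/2) = 2^((1:ℝ)/2)*δ^((1:ℝ)/2) := Real.mul_rpow (by norm_num) hδ0.le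
  have hf4 : (3*δ)^((3:ℝ)/4) = 3^((3:ℝ)/4)*δ^((3:ℝ)/4) := Real.mul_rpow (by norm_num) hδ0.le
  have hf5 : (2:ℝ)^((1:ℝ)/2) ≤ 2 := by
    calc (2:ℝ)^((1:ℝ)/2) ≤ (2:ℝ)^(1:ℝ) :=
          Real.rpow_le_rpow_of_exponent_le (by norm_num) (by norm_num)
      _ = 2 := Real.rpow_one 2
  have hf6 : (3:ℝ)^((3:ℝ)/4) ≤ 3 := by
    calc (3:ℝ)^((3:ℝ)/4) ≤ (3:ℝ)^(1:ℝ) :=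
          Real.rpow_le_rpow_of_exponent_le (by norm_num) (by norm_num)
      _ = 3 := Real.rpow_one 3
  have hb_c : |∫ s in (-(2*δ))..(2*δ), F s| ≤ 298 * M * δ := by
    have hb1 := intervalIntegral.norm_integral_le_of_norm_le (by linarith : -(2*δ) ≤ 2*δ)
      ((ae_restrict_iff' measurableSet_Ioc).mp hae_c) hFc_int
    rw [Real.norm_eq_abs] at hb1
    apply hb1.trans
    rw [hEval, hf3, hf4]
    have e5 : 4*δ^((1:ℝ)/2) * (4*(2^((1:ℝ)/2)*δ^((1:ℝ)/2))) = 16*2^((1:ℝ)/2)*δ := by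
      rw [show 4*δ^((1:ℝ)/2) * (4*(2^((1:ℝ)/2)*δ^((1:ℝ)/2)))
          = 16*2^((1:ℝ)/2)*(δ^((1:ℝ)/2)*δ^((1:ℝ)/2)) by ring, hf1]
    have e6 : 16*δ^((1:ℝ)/4) * ((8/3)*(δ^((3:ℝ)/4) + 3^((3:ℝ)/4)*δ^((3:ℝ)/4)))
        = (128/3)*δ + (128/3)*3^((3:ℝ)/4)*δ := by
      rw [show 16*δ^((1:ℝ)/4) * ((8/3)*(δ^((3:ℝ)/4) + 3^((3:ℝ)/4)*δ^((3:ℝ)/4)))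
          = (128/3)*(δ^((1:ℝ)/4)*δ^((3:ℝ)/4))
            + (128/3)*3^((3:ℝ)/4)*(δ^((1:ℝ)/4)*δ^((3:ℝ)/4)) by ring, hf2]
    rw [e5, e6]
    have hq2 : (0:ℝ) ≤ 2^((1:ℝ)/2) := Real.rpow_nonneg (by norm_num) _
    have hq3 : (0:ℝ) ≤ 3^((3:ℝ)/4) := Real.rpow_nonneg (by norm_num) _
    have hXnn : (0:ℝ) ≤ 16*δ + 16*2^((1:ℝ)/2)*δ + ((128/3)*δ + (128/3)*3^((3:ℝ)/4)*δ) := by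
      nlinarith [hδ0.le, mul_nonneg hq2 hδ0.le, mul_nonneg hq3 hδ0.le]
    have hXle : 16*δ + 16*2^((1:ℝ)/2)*δ + ((128/3)*δ + (128/3)*3^((3:ℝ)/4)*δ) ≤ 298*δ := by
      nlinarith [mul_le_mul_of_nonneg_right hf5 hδ0.le, mul_le_mul_of_nonneg_right hf6 hδ0.le]
    calc M * (16*δ + 16*2^((1:ℝ)/2)*δ + ((128/3)*δ + (128/3)*3^((3:ℝ)/4)*δ))
        ≤ M * (298*δ) := mul_le_mul_of_nonneg_left hXle hM0
      _ = 298 * M * δ := by ring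
  -- assemble
  rw [show (∫ s in (-a)..a, Real.log (|(ε + s ^ 2) / s ^ 2|) * h s) = ∫ s in (-a)..a, F s from rfl,
    hext, hsplit]
  calc |((∫ s in (-A)..(-(2*δ)), F s) + ∫ s in (-(2*δ))..(2*δ), F s) + ∫ s in (2*δ)..A, F s|
      ≤ |(∫ s in (-A)..(-(2*δ)), F s) + ∫ s in (-(2*δ))..(2*δ), F s| + |∫ s in (2*δ)..A, F s| :=
        abs_add_le _ _
    _ ≤ |∫ s in (-A)..(-(2*δ)), F s| + |∫ s in (-(2*δ))..(2*δ), F s| + |∫ s in (2*δ)..A, F s| := by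
        linarith [abs_add_le (∫ s in (-A)..(-(2*δ)), F s) (∫ s in (-(2*δ))..(2*δ), F s)]
    _ ≤ M*δ + 298*M*δ + M*δ := by linarith [hb_l, hb_c, hb_r]
    _ ≤ 300*(M+1)*δ := by nlinarith [hδ0.le, hM0, mul_nonneg hM0 hδ0.le]
end

section
/- Let W be a vector space over ℂ, let A, T : W → W be linear maps, let m ≥ 2, let μ₁, …, μ_m be distinct complex numbers, and suppose that for each l ∈ {1,…,m} there is a nonzero vector φ_l ∈ W with (id + A - μ_l · T) φ_l = 0. If the family (φ₁, …, φ_m) is linearly dependent, then for every μ ∈ ℂ the linear map id + A - μ · T has nontrivial kernel, i.e. there exists a nonzero g ∈ W with (id + A - μ · T) g = 0. -/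
/-!
If `μ'` is one of the `μ l`, take `g = φ l`. Otherwise every relation `∑ c l • φ l = 0` yields
`g = ∑ (μ l - μ')⁻¹ c l • φ l` with `(id + A - μ' • T) g = T (∑ c l • φ l) = 0`, so it suffices to
find a relation with `g ≠ 0`. If there were none, the kernel of `c ↦ ∑ c l • φ l` would be
invariant under multiplication by the distinct weights `(μ l - μ')⁻¹`; on the quotient by this
kernel, i.e. on the span of the `φ l`, the `φ l` would then be eigenvectors for distinct
eigenvalues, hence linearly independent.
-/

open Module

theorem exists_linearCombination_eq_zero_and_weighted_ne_zero {𝕜 W ι : Type*} [Field 𝕜]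
    [AddCommGroup W] [Module 𝕜 W] [Fintype ι] {φ : ι → W} (hφ : ∀ i, φ i ≠ 0)
    (hdep : ¬ LinearIndependent 𝕜 φ) {ν : ι → 𝕜} (hν : Function.Injective ν) :
    ∃ c : ι → 𝕜, ∑ i, c i • φ i = 0 ∧ ∑ i, (ν i * c i) • φ i ≠ 0 := by
  classical
  by_contra! hstable
  let Φ := Fintype.linearCombination 𝕜 φ
  let D : End 𝕜 (ι → 𝕜) := LinearMap.pi fun i => ν i • LinearMap.proj i
  have hD : LinearMap.ker Φ ≤ (LinearMap.ker Φ).comap D := fun c hc => by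
    simpa [Φ, D, Fintype.linearCombination_apply] using
      hstable c (by simpa [Φ, Fintype.linearCombination_apply] using hc)
  let D' : End 𝕜 ((ι → 𝕜) ⧸ LinearMap.ker Φ) := (LinearMap.ker Φ).mapQ _ D hD
  let e : ι → (ι → 𝕜) ⧸ LinearMap.ker Φ := fun i => (LinearMap.ker Φ).mkQ (Pi.single i 1)
  have hΦe : ∀ i, (LinearMap.ker Φ).liftQ Φ le_rfl (e i) = φ i := fun i => by
    simp [e, Φ, Fintype.linearCombination_apply_single]
  have heig : ∀ i, D'.HasEigenvector (ν i) (e i) := fun i => by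
    refine ⟨End.mem_eigenspace_iff.mpr ?_, fun h => hφ i ?_⟩
    · have : D (Pi.single i 1) = ν i • Pi.single i 1 := by
        ext j; by_cases h : j = i <;> simp [D, h]
      simp only [D', e, Submodule.mapQ_apply, Submodule.mkQ_apply, this]
      rfl
    · rw [← hΦe i, h, map_zero]
  have hcomp : (LinearMap.ker Φ).liftQ Φ le_rfl ∘ e = φ := funext hΦe
  exact hdep <| hcomp ▸ (End.eigenvectors_linearIndependent' D' ν hν e heig).map' _
    (Submodule.ker_liftQ_eq_bot _ _ _ le_rfl)

theorem sub_smul_apply_sum_eq_apply_sum {𝕜 W ι : Type*} [Field 𝕜] [AddCommGroup W]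
    [Module 𝕜 W] [Fintype ι] {S T : W →ₗ[𝕜] W} {μ : ι → 𝕜} {φ : ι → W}
    (hφ : ∀ i, (S - μ i • T) (φ i) = 0) {μ' : 𝕜} (hμ' : ∀ i, μ i ≠ μ') (c : ι → 𝕜) :
    (S - μ' • T) (∑ i, ((μ i - μ')⁻¹ * c i) • φ i) = T (∑ i, c i • φ i) := by
  simp only [map_sum, map_smul]
  refine Finset.sum_congr rfl fun i _ => ?_
  have hSφ : S (φ i) = μ i • T (φ i) := by
    simpa [sub_eq_zero] using hφ i
  have hne : μ i - μ' ≠ 0 := sub_ne_zero.mpr (hμ' i)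
  simp only [LinearMap.sub_apply, LinearMap.smul_apply, hSφ, ← sub_smul, smul_smul]
  rw [mul_right_comm, inv_mul_cancel₀ hne, one_mul]

theorem stmt_18_general {W : Type*} [AddCommGroup W] [Module ℂ W]
    (A T : W →ₗ[ℂ] W) (m : ℕ)
    (μ : Fin m → ℂ) (hμ : Function.Injective μ)
    (φ : Fin m → W) (hφ : ∀ l, φ l ≠ 0)
    (heq : ∀ l, ((LinearMap.id : W →ₗ[ℂ] W) + A - μ l • T) (φ l) = 0)
    (hdep : ¬ LinearIndependent ℂ φ) :
    ∀ μ' : ℂ, ∃ g : W, g ≠ 0 ∧ ((LinearMap.id : W →ₗ[ℂ] W) + A - μ' • T) g = 0 := by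
  intro μ'
  by_cases hμ' : ∃ l, μ l = μ'
  · obtain ⟨l, rfl⟩ := hμ'
    exact ⟨φ l, hφ l, heq l⟩
  push Not at hμ'
  have hν : Function.Injective fun i => (μ i - μ')⁻¹ :=
    fun i j hij => hμ (sub_left_injective (inv_injective hij))
  obtain ⟨c, hc, hg⟩ := exists_linearCombination_eq_zero_and_weighted_ne_zero hφ hdep hν
  exact ⟨_, hg, by rw [sub_smul_apply_sum_eq_apply_sum heq hμ' c, hc, map_zero]⟩

theorem stmt_18 {W : Type*} [AddCommGroup W] [Module ℂ W]
    (A T : W →ₗ[ℂ] W) (m : ℕ) (hm : 2 ≤ m)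
    (μ : Fin m → ℂ) (hμ : Function.Injective μ)
    (φ : Fin m → W) (hφ : ∀ l, φ l ≠ 0)
    (heq : ∀ l, ((LinearMap.id : W →ₗ[ℂ] W) + A - μ l • T) (φ l) = 0)
    (hdep : ¬ LinearIndependent ℂ φ) :
    ∀ μ' : ℂ, ∃ g : W, g ≠ 0 ∧ ((LinearMap.id : W →ₗ[ℂ] W) + A - μ' • T) g = 0 :=
  stmt_18_general A T m μ hμ φ hφ heq hdep
end
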